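/- arXiv:2105.09946 — 2 statements merged into one kernel-verified Lean document; each statement's English description precedes it below -/
import Mathlib

section
/- For every s ∈ (0, 1/2], t > 0 and x > 0, one has the contour-integral identity ∫₀^∞ e^{−t ξ^{2s}} cos(xξ) dξ = (1/x) ∫₀^∞ exp(−t (u/x)^{2s} cos(πs)) · sin(t (u/x)^{2s} sin(πs)) · e^{−u} du, both integrals being absolutely convergent. -/
/-!
With `c = 2s ∈ (0, 1]`, the function `F(z) = exp(-t z^c - i x z)` is holomorphic off the negative
axis, so the ray integral `I(θ) = ∫₀^∞ F(ρe^{-iθ}) e^{-iθ} dρ` does not depend on `θ ∈ [0, π/2]`.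
Indeed `∂_θ (F(ρe^{-iθ}) e^{-iθ}) = -i ∂_ρ (ρe^{-iθ} F(ρe^{-iθ}))`, and for `θ > 0` the primitive
`ρe^{-iθ} F(ρe^{-iθ})` decays like `exp(-xρ sin θ)`, so `I' = 0` on `(0, π/2)`. Since
`cos(cθ) ≥ cos θ` and `max(cos θ, sin θ) ≥ 1/2`, the integrands are dominated uniformly in `θ` by
a multiple of `exp(-tρ^c/2) + exp(-xρ/2)`, which also gives continuity of `I` up to `θ = 0`.
The identity is the real part of `I(0) = I(π/2)`, after the substitution `u = xρ`.
-/

open MeasureTheory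

/-- The nonlocal dispersion operator `D[u](t,x)`, in symmetrized form. -/
noncomputable def Dop (J : ℝ → ℝ) (u : ℝ → ℝ → ℝ) (t x : ℝ) : ℝ :=
  ∫ z in Set.Ioi (0:ℝ), (u t (x + z) + u t (x - z) - 2 * u t x) * J z

/-- Hypothesis (H) on the kernel `J`. -/
def HypH (s J0 J1 R0 : ℝ) (J : ℝ → ℝ) : Prop :=
  0 < J0 ∧ 0 < J1 ∧ 1 ≤ R0 ∧
  (∀ z, 0 ≤ J z) ∧ (∀ z, J (-z) = J z) ∧
  (∫ z in Set.Icc (-1:ℝ) 1, J z * z ^ 2) ≤ 2 * J1 ∧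
  (∀ z : ℝ, 1 ≤ |z| → J z ≤ J0 * |z| ^ (-(1 + 2*s))) ∧
  (∀ z : ℝ, R0 ≤ |z| → J0⁻¹ * |z| ^ (-(1 + 2*s)) ≤ J z)

/-- An ignition nonlinearity with threshold `θ`. -/
def Ignition (θ : ℝ) (f : ℝ → ℝ) : Prop :=
  (∃ K : NNReal, LipschitzOnWith K f (Set.Icc 0 1)) ∧
  (∀ u : ℝ, 0 ≤ u → u ≤ θ → f u = 0) ∧
  (∀ u : ℝ, θ < u → u < 1 → 0 < f u) ∧
  f 1 = 0

/-- The profile `w(t,x) = (x^{2s}/(κt) + γ)⁻¹`. -/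
noncomputable def w (s κ γ t x : ℝ) : ℝ := (x ^ (2*s) / (κ * t) + γ)⁻¹

/-- The level point `X(t)` where `w(t, X(t)) = ε`. -/
noncomputable def X (s κ γ ε t : ℝ) : ℝ :=
  (ε⁻¹ - γ) ^ (1/(2*s)) * (κ * t) ^ (1/(2*s))

/-- The sub-solution `u̲`. -/
noncomputable def ubar (s κ γ ε t x : ℝ) : ℝ :=
  if x ≤ X s κ γ ε t then ε
  else 3 * (1 - w s κ γ t x / ε + (w s κ γ t x) ^ 2 / (3 * ε ^ 2)) * w s κ γ t x

/-- The Fourier symbol of the dispersion operator. -/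
noncomputable def W (J : ℝ → ℝ) (ξ : ℝ) : ℝ := ∫ y : ℝ, (Real.cos (ξ * y) - 1) * J y

open Set Filter Topology
open Complex (I)
open scoped Complex Real

theorem eq_of_continuousOn_Icc_of_hasDerivAt_zero {E : Type*} [NormedAddCommGroup E]
    [NormedSpace ℝ E] {f : ℝ → E} {a b : ℝ} (hab : a < b)
    (hf : ContinuousOn f (Icc a b)) (hf' : ∀ y ∈ Ioo a b, HasDerivAt f 0 y) : f a = f b := by
  obtain ⟨C, hC⟩ := isOpen_Ioo.exists_is_const_of_deriv_eq_zero isPreconnected_Ioo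
    (fun y hy => (hf' y hy).differentiableAt.differentiableWithinAt) (fun y hy => (hf' y hy).deriv)
  have hIcc : EqOn f (fun _ => C) (Icc a b) :=
    EqOn.of_subset_closure hC hf continuousOn_const Ioo_subset_Icc_self (closure_Ioo hab.ne).ge
  exact (hIcc (left_mem_Icc.2 hab.le)).trans (hIcc (right_mem_Icc.2 hab.le)).symm

theorem half_le_cos_or_half_le_sin {θ : ℝ} (hθ : θ ∈ Icc 0 (π / 2)) :
    1 / 2 ≤ Real.cos θ ∨ 1 / 2 ≤ Real.sin θ := by
  have hcos := Real.cos_nonneg_of_mem_Icc ⟨by linarith [hθ.1, Real.pi_pos], hθ.2⟩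
  have hsin := Real.sin_nonneg_of_nonneg_of_le_pi hθ.1 (by linarith [hθ.2, Real.pi_pos])
  by_contra! h
  nlinarith [Real.sin_sq_add_cos_sq θ]

/-- `-t z^c - i x z` at `z = ρe^{-iθ}`, with `z^c = ρ^c e^{-icθ}` the principal power. -/
noncomputable def rayExponent (c t x θ ρ : ℝ) : ℂ :=
  -↑(t * ρ ^ c) * cexp (↑(-(c * θ)) * I) - I * x * ρ * cexp (↑(-θ) * I)

noncomputable def rayIntegrand (c t x θ ρ : ℝ) : ℂ :=
  cexp (rayExponent c t x θ ρ) * cexp (↑(-θ) * I)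

noncomputable def rayIntegral (c t x θ : ℝ) : ℂ := ∫ ρ in Ioi 0, rayIntegrand c t x θ ρ

noncomputable def rayPrimitive (c t x θ ρ : ℝ) : ℂ :=
  ρ * cexp (↑(-θ) * I) * cexp (rayExponent c t x θ ρ)

/-- Both `∂_ρ rayPrimitive` and `i ∂_θ rayIntegrand`: the Cauchy–Riemann equation for `F`. -/
noncomputable def rayDeriv (c t x θ ρ : ℝ) : ℂ :=
  cexp (↑(-θ) * I) * cexp (rayExponent c t x θ ρ) *
    (1 - ↑(t * c * ρ ^ c) * cexp (↑(-(c * θ)) * I) - I * x * ρ * cexp (↑(-θ) * I))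

noncomputable def rayBound (c t x ρ : ℝ) : ℝ :=
  (1 + t * ρ ^ c + x * ρ) * (Real.exp (-(t / 2) * ρ ^ c) + Real.exp (-(x / 2) * ρ))

section RayIntegral

variable {c t x θ ρ : ℝ}

theorem re_rayExponent (c t x θ ρ : ℝ) :
    (rayExponent c t x θ ρ).re = -(t * ρ ^ c * Real.cos (c * θ)) - x * ρ * Real.sin θ := by
  simp only [rayExponent, Complex.sub_re, Complex.neg_re, Complex.mul_re, Complex.mul_im,
    Complex.neg_im, Complex.I_re, Complex.I_im, Complex.ofReal_re, Complex.ofReal_im,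
    Complex.exp_ofReal_mul_I_re, Complex.exp_ofReal_mul_I_im, Real.cos_neg, Real.sin_neg]
  ring

theorem im_rayExponent (c t x θ ρ : ℝ) :
    (rayExponent c t x θ ρ).im = t * ρ ^ c * Real.sin (c * θ) - x * ρ * Real.cos θ := by
  simp only [rayExponent, Complex.sub_im, Complex.neg_re, Complex.mul_re, Complex.mul_im,
    Complex.neg_im, Complex.I_re, Complex.I_im, Complex.ofReal_re, Complex.ofReal_im,
    Complex.exp_ofReal_mul_I_re, Complex.exp_ofReal_mul_I_im, Real.cos_neg, Real.sin_neg]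
  ring

theorem re_rayIntegrand (c t x θ ρ : ℝ) :
    (rayIntegrand c t x θ ρ).re = Real.exp ((rayExponent c t x θ ρ).re) *
      Real.cos ((rayExponent c t x θ ρ).im - θ) := by
  rw [rayIntegrand, ← Complex.exp_add, Complex.exp_re]
  simp [sub_eq_add_neg]

theorem norm_rayIntegrand (c t x θ ρ : ℝ) :
    ‖rayIntegrand c t x θ ρ‖ = Real.exp ((rayExponent c t x θ ρ).re) := by
  simp [rayIntegrand, Complex.norm_exp]

theorem norm_rayDeriv_le (hc : 0 ≤ c) (ht : 0 ≤ t) (hx : 0 ≤ x) (hρ : 0 ≤ ρ) :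
    ‖rayDeriv c t x θ ρ‖ ≤ (1 + t * c * ρ ^ c + x * ρ) * Real.exp ((rayExponent c t x θ ρ).re) := by
  have hP : ‖1 - ↑(t * c * ρ ^ c) * cexp (↑(-(c * θ)) * I) - I * x * ρ * cexp (↑(-θ) * I)‖ ≤
      1 + t * c * ρ ^ c + x * ρ := by
    refine (norm_sub_le _ _).trans (add_le_add ((norm_sub_le _ _).trans (add_le_add ?_ ?_)) ?_)
    · simp
    · rw [norm_mul, Complex.norm_exp_ofReal_mul_I, mul_one, Complex.norm_real,
        Real.norm_of_nonneg (by positivity)]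
    · rw [norm_mul, Complex.norm_exp_ofReal_mul_I, mul_one]
      simp [abs_of_nonneg hx, abs_of_nonneg hρ]
  rw [rayDeriv, norm_mul, norm_mul, Complex.norm_exp_ofReal_mul_I, one_mul, Complex.norm_exp,
    mul_comm]
  gcongr

theorem exp_re_rayExponent_le (hc : 0 ≤ c) (hc1 : c ≤ 1) (ht : 0 ≤ t) (hx : 0 ≤ x)
    (hθ : θ ∈ Icc 0 (π / 2)) (hρ : 0 ≤ ρ) :
    Real.exp ((rayExponent c t x θ ρ).re) ≤
      Real.exp (-(t / 2) * ρ ^ c) + Real.exp (-(x / 2) * ρ) := by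
  have hpi := Real.pi_pos
  have hcθ : c * θ ≤ θ := mul_le_of_le_one_left hθ.1 hc1
  have hcos : Real.cos θ ≤ Real.cos (c * θ) :=
    Real.cos_le_cos_of_nonneg_of_le_pi (mul_nonneg hc hθ.1) (by linarith [hθ.2]) hcθ
  have hcos0 := Real.cos_nonneg_of_mem_Icc ⟨by linarith [hθ.1], hθ.2⟩
  have hsin0 := Real.sin_nonneg_of_nonneg_of_le_pi hθ.1 (by linarith [hθ.2])
  have htρ : 0 ≤ t * ρ ^ c := by positivity
  have hxρ : 0 ≤ x * ρ := by positivity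
  rw [re_rayExponent]
  rcases half_le_cos_or_half_le_sin hθ with h | h
  · refine le_add_of_le_of_nonneg (Real.exp_le_exp.2 ?_) (Real.exp_pos _).le
    nlinarith [mul_le_mul_of_nonneg_left (h.trans hcos) htρ, mul_nonneg hxρ hsin0]
  · refine le_add_of_nonneg_of_le (Real.exp_pos _).le (Real.exp_le_exp.2 ?_)
    nlinarith [mul_le_mul_of_nonneg_left h hxρ, mul_nonneg htρ (hcos0.trans hcos)]

theorem hasDerivAt_cexp_ofReal_neg_mul_I (a θ : ℝ) :
    HasDerivAt (fun θ : ℝ => cexp (↑(-(a * θ)) * I)) (cexp (↑(-(a * θ)) * I) * (-a * I)) θ := by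
  have := (((hasDerivAt_id θ).const_mul a).neg.ofReal_comp.mul_const I).cexp
  convert this using 2 <;> simp

theorem hasDerivAt_rayIntegrand_angle (c t x θ ρ : ℝ) :
    HasDerivAt (fun θ => rayIntegrand c t x θ ρ) (-I * rayDeriv c t x θ ρ) θ := by
  have h1 := hasDerivAt_cexp_ofReal_neg_mul_I c θ
  have h2 : HasDerivAt (fun θ : ℝ => cexp (↑(-θ) * I)) (cexp (↑(-θ) * I) * (-1 * I)) θ := by
    simpa using hasDerivAt_cexp_ofReal_neg_mul_I 1 θ
  have hE : HasDerivAt (fun θ => rayExponent c t x θ ρ)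
      (-↑(t * ρ ^ c) * (cexp (↑(-(c * θ)) * I) * (-c * I))
        - I * x * ρ * (cexp (↑(-θ) * I) * (-1 * I))) θ :=
    (h1.const_mul _).fun_sub (h2.const_mul _)
  refine (hE.cexp.fun_mul h2).congr_deriv ?_
  simp only [rayDeriv, rayExponent]
  push_cast
  ring

theorem hasDerivAt_rayPrimitive (c t x θ : ℝ) {ρ : ℝ} (hρ : 0 < ρ) :
    HasDerivAt (rayPrimitive c t x θ) (rayDeriv c t x θ ρ) ρ := by
  have hpow : HasDerivAt (fun ρ : ℝ => ((t * ρ ^ c : ℝ) : ℂ)) ↑(t * (c * ρ ^ (c - 1))) ρ :=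
    ((Real.hasDerivAt_rpow_const (Or.inl hρ.ne')).const_mul t).ofReal_comp
  have hid : HasDerivAt (fun ρ : ℝ => (ρ : ℂ)) 1 ρ := (hasDerivAt_id ρ).ofReal_comp
  have hE : HasDerivAt (rayExponent c t x θ) (-↑(t * (c * ρ ^ (c - 1))) * cexp (↑(-(c * θ)) * I)
      - I * x * 1 * cexp (↑(-θ) * I)) ρ :=
    (hpow.neg.mul_const _).sub ((hid.const_mul (I * x)).mul_const _)
  refine ((hid.mul_const (cexp (↑(-θ) * I))).fun_mul hE.cexp).congr_deriv ?_
  have hrpow : ρ ^ c = ρ * ρ ^ (c - 1) := by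
    rw [Real.rpow_sub_one hρ.ne', mul_div_cancel₀ _ hρ.ne']
  simp only [rayDeriv, hrpow]
  push_cast
  ring

theorem continuous_rayIntegrand (hc : 0 ≤ c) : Continuous (rayIntegrand c t x θ) := by
  have := Real.continuous_rpow_const hc
  unfold rayIntegrand rayExponent
  fun_prop

theorem continuous_rayDeriv (hc : 0 ≤ c) : Continuous (rayDeriv c t x θ) := by
  have := Real.continuous_rpow_const hc
  unfold rayDeriv rayExponent
  fun_prop

theorem norm_rayIntegrand_le_rayBound (hc : 0 ≤ c) (hc1 : c ≤ 1) (ht : 0 ≤ t) (hx : 0 ≤ x)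
    (hθ : θ ∈ Icc 0 (π / 2)) (hρ : 0 ≤ ρ) : ‖rayIntegrand c t x θ ρ‖ ≤ rayBound c t x ρ := by
  rw [norm_rayIntegrand, rayBound]
  exact (exp_re_rayExponent_le hc hc1 ht hx hθ hρ).trans
    (le_mul_of_one_le_left (by positivity) (by nlinarith [Real.rpow_nonneg hρ c]))

theorem norm_rayDeriv_le_rayBound (hc : 0 ≤ c) (hc1 : c ≤ 1) (ht : 0 ≤ t) (hx : 0 ≤ x)
    (hθ : θ ∈ Icc 0 (π / 2)) (hρ : 0 ≤ ρ) : ‖rayDeriv c t x θ ρ‖ ≤ rayBound c t x ρ := by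
  have hρc := Real.rpow_nonneg hρ c
  refine (norm_rayDeriv_le hc ht hx hρ).trans
    (mul_le_mul ?_ (exp_re_rayExponent_le hc hc1 ht hx hθ hρ) (Real.exp_pos _).le (by positivity))
  nlinarith [mul_nonneg (mul_nonneg ht hρc) (sub_nonneg.2 hc1)]

theorem integrableOn_rayBound (hc : 0 < c) (ht : 0 < t) (hx : 0 < x) :
    IntegrableOn (rayBound c t x) (Ioi 0) := by
  have hterm : ∀ q p b : ℝ, 0 ≤ q → 0 < p → 0 < b →
      IntegrableOn (fun ρ : ℝ => ρ ^ q * Real.exp (-b * ρ ^ p)) (Ioi 0) :=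
    fun q p b hq hp hb => integrableOn_rpow_mul_exp_neg_mul_rpow (by linarith) hp hb
  have ht2 : 0 < t / 2 := by positivity
  have hx2 : 0 < x / 2 := by positivity
  refine ((((hterm 0 c _ le_rfl hc ht2).add ((hterm c c _ hc.le hc ht2).const_mul t)).add
    ((hterm 1 c _ zero_le_one hc ht2).const_mul x)).add
    (((hterm 0 1 _ le_rfl one_pos hx2).add ((hterm c 1 _ hc.le one_pos hx2).const_mul t)).add
    ((hterm 1 1 _ zero_le_one one_pos hx2).const_mul x))).congr_fun (fun ρ _ => ?_)
    measurableSet_Ioi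
  simp only [rayBound, Pi.add_apply, Real.rpow_zero, Real.rpow_one]
  ring

theorem integrableOn_rayIntegrand (hc : 0 < c) (hc1 : c ≤ 1) (ht : 0 < t) (hx : 0 < x)
    (hθ : θ ∈ Icc 0 (π / 2)) : IntegrableOn (rayIntegrand c t x θ) (Ioi 0) :=
  (integrableOn_rayBound hc ht hx).mono'
    (continuous_rayIntegrand hc.le).aestronglyMeasurable.restrict
    ((ae_restrict_iff' measurableSet_Ioi).2 (.of_forall fun _ hρ =>
      norm_rayIntegrand_le_rayBound hc.le hc1 ht.le hx.le hθ (le_of_lt hρ)))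

theorem integrableOn_rayDeriv (hc : 0 < c) (hc1 : c ≤ 1) (ht : 0 < t) (hx : 0 < x)
    (hθ : θ ∈ Icc 0 (π / 2)) : IntegrableOn (rayDeriv c t x θ) (Ioi 0) :=
  (integrableOn_rayBound hc ht hx).mono'
    (continuous_rayDeriv hc.le).aestronglyMeasurable.restrict
    ((ae_restrict_iff' measurableSet_Ioi).2 (.of_forall fun _ hρ =>
      norm_rayDeriv_le_rayBound hc.le hc1 ht.le hx.le hθ (le_of_lt hρ)))

theorem integral_rayDeriv_eq_zero (hc : 0 < c) (hc1 : c ≤ 1) (ht : 0 < t) (hx : 0 < x)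
    (hθ : θ ∈ Ioc 0 (π / 2)) : ∫ ρ in Ioi 0, rayDeriv c t x θ ρ = 0 := by
  have hsin : 0 < Real.sin θ := Real.sin_pos_of_pos_of_lt_pi hθ.1 (by linarith [hθ.2, Real.pi_pos])
  have hcos : 0 ≤ Real.cos (c * θ) := Real.cos_nonneg_of_mem_Icc
    ⟨by nlinarith [hθ.1, Real.pi_pos], by nlinarith [hθ.1, hθ.2]⟩
  have hcont : Continuous (rayPrimitive c t x θ) := by
    have := Real.continuous_rpow_const hc.le
    unfold rayPrimitive rayExponent
    fun_prop
  have hdecay : Tendsto (rayPrimitive c t x θ) atTop (𝓝 0) := by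
    refine squeeze_zero_norm' ?_ (by simpa using
      tendsto_rpow_mul_exp_neg_mul_atTop_nhds_zero 1 _ (mul_pos hx hsin))
    filter_upwards [eventually_ge_atTop 0] with ρ hρ
    have hre : (rayExponent c t x θ ρ).re ≤ -(x * Real.sin θ * ρ) := by
      rw [re_rayExponent]
      nlinarith [mul_nonneg (mul_nonneg ht.le (Real.rpow_nonneg hρ c)) hcos]
    rw [rayPrimitive, norm_mul, norm_mul, Complex.norm_exp_ofReal_mul_I, mul_one,
      Complex.norm_exp, Complex.norm_real, Real.norm_of_nonneg hρ]
    gcongr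
  rw [integral_Ioi_of_hasDerivAt_of_tendsto hcont.continuousWithinAt
    (fun ρ hρ => hasDerivAt_rayPrimitive c t x θ hρ)
    (integrableOn_rayDeriv hc hc1 ht hx (Ioc_subset_Icc_self hθ)) hdecay]
  simp [rayPrimitive]

theorem hasDerivAt_rayIntegral (hc : 0 < c) (hc1 : c ≤ 1) (ht : 0 < t) (hx : 0 < x)
    (hθ : θ ∈ Ioo 0 (π / 2)) : HasDerivAt (rayIntegral c t x) 0 θ := by
  have hmem : ∀ θ' ∈ Ioo 0 (π / 2), θ' ∈ Icc 0 (π / 2) := fun _ h => Ioo_subset_Icc_self h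
  have h := (hasDerivAt_integral_of_dominated_loc_of_deriv_le (μ := volume.restrict (Ioi 0))
    (F := fun θ ρ => rayIntegrand c t x θ ρ) (F' := fun θ ρ => -I * rayDeriv c t x θ ρ)
    (isOpen_Ioo.mem_nhds hθ)
    (.of_forall fun _ => (continuous_rayIntegrand hc.le).aestronglyMeasurable)
    (integrableOn_rayIntegrand hc hc1 ht hx (hmem θ hθ))
    (continuous_const.mul (continuous_rayDeriv hc.le)).aestronglyMeasurable
    ((ae_restrict_iff' measurableSet_Ioi).2 (.of_forall fun ρ hρ θ' hθ' => by
      rw [norm_mul, norm_neg, Complex.norm_I, one_mul]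
      exact norm_rayDeriv_le_rayBound hc.le hc1 ht.le hx.le (hmem θ' hθ') (le_of_lt hρ)))
    (integrableOn_rayBound hc ht hx)
    (.of_forall fun ρ θ' _ => hasDerivAt_rayIntegrand_angle c t x θ' ρ)).2
  rwa [integral_const_mul, integral_rayDeriv_eq_zero hc hc1 ht hx (Ioo_subset_Ioc_self hθ),
    mul_zero] at h

theorem continuousOn_rayIntegral (hc : 0 < c) (hc1 : c ≤ 1) (ht : 0 < t) (hx : 0 < x) :
    ContinuousOn (rayIntegral c t x) (Icc 0 (π / 2)) :=
  continuousOn_of_dominated (fun _ _ => (continuous_rayIntegrand hc.le).aestronglyMeasurable)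
    (fun _ hθ => (ae_restrict_iff' measurableSet_Ioi).2 (.of_forall fun _ hρ =>
      norm_rayIntegrand_le_rayBound hc.le hc1 ht.le hx.le hθ (le_of_lt hρ)))
    (integrableOn_rayBound hc ht hx)
    (.of_forall fun ρ => (continuous_iff_continuousAt.2 fun θ =>
      (hasDerivAt_rayIntegrand_angle c t x θ ρ).continuousAt).continuousOn)

theorem rayIntegral_zero_eq_rayIntegral_pi_div_two (hc : 0 < c) (hc1 : c ≤ 1) (ht : 0 < t)
    (hx : 0 < x) : rayIntegral c t x 0 = rayIntegral c t x (π / 2) :=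
  eq_of_continuousOn_Icc_of_hasDerivAt_zero (by positivity) (continuousOn_rayIntegral hc hc1 ht hx)
    fun _ hθ => hasDerivAt_rayIntegral hc hc1 ht hx hθ

theorem re_rayIntegrand_zero (c t x ρ : ℝ) :
    (rayIntegrand c t x 0 ρ).re = Real.exp (-(t * ρ ^ c)) * Real.cos (x * ρ) := by
  simp [re_rayIntegrand, re_rayExponent, im_rayExponent]

theorem re_rayIntegrand_pi_div_two (c t x ρ : ℝ) :
    (rayIntegrand c t x (π / 2) ρ).re = Real.exp (-(t * ρ ^ c * Real.cos (c * (π / 2)))) *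
      Real.sin (t * ρ ^ c * Real.sin (c * (π / 2))) * Real.exp (-(x * ρ)) := by
  rw [re_rayIntegrand, re_rayExponent, im_rayExponent, Real.sin_pi_div_two, Real.cos_pi_div_two,
    mul_zero, sub_zero, mul_one, Real.cos_sub_pi_div_two, sub_eq_add_neg, Real.exp_add]
  ring

end RayIntegral

/-- the contour-integral identity obtained by rotating the contour
by `-π/2`, together with absolute convergence of both integrals. -/
theorem contour_integral_identity
    (s t x : ℝ) (hs : 0 < s ∧ s ≤ 1/2) (ht : 0 < t) (hx : 0 < x) :
    IntegrableOn (fun ξ : ℝ => Real.exp (-t * ξ ^ (2*s)) * Real.cos (x * ξ))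
      (Set.Ioi 0) ∧
    IntegrableOn (fun u : ℝ =>
        Real.exp (-t * (u / x) ^ (2*s) * Real.cos (Real.pi * s)) *
          Real.sin (t * (u / x) ^ (2*s) * Real.sin (Real.pi * s)) * Real.exp (-u))
      (Set.Ioi 0) ∧
    (∫ ξ in Set.Ioi (0:ℝ), Real.exp (-t * ξ ^ (2*s)) * Real.cos (x * ξ)) =
      (1 / x) * ∫ u in Set.Ioi (0:ℝ),
        Real.exp (-t * (u / x) ^ (2*s) * Real.cos (Real.pi * s)) *
          Real.sin (t * (u / x) ^ (2*s) * Real.sin (Real.pi * s)) * Real.exp (-u) := by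
  have hc : 0 < 2 * s := by linarith [hs.1]
  have hc1 : 2 * s ≤ 1 := by linarith [hs.2]
  set φ : ℝ → ℝ := fun u => Real.exp (-t * (u / x) ^ (2*s) * Real.cos (Real.pi * s)) *
    Real.sin (t * (u / x) ^ (2*s) * Real.sin (Real.pi * s)) * Real.exp (-u)
  have hreal₀ : (fun ξ : ℝ => Real.exp (-t * ξ ^ (2*s)) * Real.cos (x * ξ)) =
      fun ξ => (rayIntegrand (2 * s) t x 0 ξ).re := by
    ext ξ
    rw [re_rayIntegrand_zero, neg_mul]
  have hreal₁ : (fun ρ => φ (x * ρ)) = fun ρ => (rayIntegrand (2 * s) t x (π / 2) ρ).re := by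
    ext ρ
    simp only [φ, re_rayIntegrand_pi_div_two, mul_div_cancel_left₀ _ hx.ne',
      show 2 * s * (π / 2) = π * s by ring]
    ring_nf
  have hint₀ := integrableOn_rayIntegrand hc hc1 ht hx (left_mem_Icc.2 (by positivity))
  have hint₁ := integrableOn_rayIntegrand hc hc1 ht hx (right_mem_Icc.2 (by positivity))
  refine ⟨hreal₀ ▸ hint₀.re, ?_, ?_⟩
  · rw [← mul_zero x, ← integrableOn_Ioi_comp_mul_left_iff φ 0 hx, hreal₁]
    exact hint₁.re
  · calc ∫ ξ in Ioi 0, Real.exp (-t * ξ ^ (2*s)) * Real.cos (x * ξ)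
        _ = (rayIntegral (2 * s) t x 0).re := by rw [hreal₀]; exact integral_re hint₀
        _ = (rayIntegral (2 * s) t x (π / 2)).re := by
          rw [rayIntegral_zero_eq_rayIntegral_pi_div_two hc hc1 ht hx]
        _ = ∫ ρ in Ioi 0, φ (x * ρ) := by rw [hreal₁]; exact (integral_re hint₁).symm
        _ = 1 / x * ∫ u in Ioi 0, φ u := by
          rw [integral_comp_mul_left_Ioi φ 0 hx, mul_zero, smul_eq_mul, one_div]
end

section
/- Assume J satisfies Hypothesis (H) with s ∈ (0, 1/2), f is an ignition nonlinearity with threshold θ ∈ (0,1), and fix κ > 0, ε ∈ (θ,1) and γ ∈ [γ₀, 1/ε) with γ₀ as furnished by the far-field estimate (Proposition 4.6). Then there exists t₄ ≥ 1 such that for all t ≥ t₄ and all x ∈ [X(t), X_η(t)], one has 3 x^{2s} w(t,x)² / (κ t²) ≤ D[u̲](t,x) + f(u̲(t,x)). -/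
open MeasureTheory

/-!
On `[X(t), X_η(t)]` the subsolution takes values in `[θ + η, ε]`, where `f ≥ m` for some
`m > 0`, while the left-hand side is at most `3 / (γ t)`. It therefore suffices that
`D[u̲] ≥ -m/2` for large `t`. The derivative of `u̲` vanishes left of `X(t)` and its slope is
at least `-12 s ε / X(t)²` to the right, so every second difference of `u̲` at step `z` is at
least `-12 s ε z² / X(t)²`. Splitting `D[u̲]` at `z = 1` and at a large `z = A` bounds it below
by `-C(A) / X(t)²` plus a tail of size `O(A^{-2s})`, and `X(t) → ∞`.

The piece near `z = 0` needs `z² J` integrable on `(0, 1]`, which (H) does not provide. It comes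
from the far-field estimate: `D[u̲] ≠ 0` far out, where `u̲` is uniformly convex on a unit
window, so `z² J` is dominated by the integrand of `D[u̲]`.
-/

open Set Filter Topology

section profile

variable {s κ γ t c : ℝ}

lemma X_pos (hκt : 0 < κ * t) (hc : 0 < c⁻¹ - γ) : 0 < X s κ γ c t := by
  unfold X; positivity

lemma X_rpow (hs : 0 < s) (hκt : 0 < κ * t) (hc : 0 ≤ c⁻¹ - γ) :
    X s κ γ c t ^ (2 * s) = (c⁻¹ - γ) * (κ * t) := by
  unfold X
  rw [Real.mul_rpow (by positivity) (by positivity), ← Real.rpow_mul hc,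
    ← Real.rpow_mul hκt.le, one_div_mul_cancel (by positivity), Real.rpow_one, Real.rpow_one]

lemma w_pos (hκt : 0 < κ * t) (hγ : 0 < γ) {y : ℝ} (hy : 0 ≤ y) : 0 < w s κ γ t y := by
  unfold w; positivity

lemma w_mul_rpow_div (hκt : 0 < κ * t) (hγ : 0 < γ) {y : ℝ} (hy : 0 ≤ y) :
    w s κ γ t y * (y ^ (2 * s) / (κ * t)) = 1 - γ * w s κ γ t y := by
  have : y ^ (2 * s) / (κ * t) + γ ≠ 0 := by positivity
  unfold w; field_simp; ring

lemma w_antitoneOn (hs : 0 < s) (hκt : 0 < κ * t) (hγ : 0 < γ) :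
    AntitoneOn (w s κ γ t) (Ici 0) := fun a (ha : 0 ≤ a) b _ hab => by
  have : a ^ (2 * s) ≤ b ^ (2 * s) := Real.rpow_le_rpow ha hab (by positivity)
  unfold w
  gcongr

lemma w_X (hs : 0 < s) (hκt : 0 < κ * t) (hγc : γ < c⁻¹) :
    w s κ γ t (X s κ γ c t) = c := by
  rw [w, X_rpow hs hκt (by linarith), mul_div_cancel_right₀ _ hκt.ne', sub_add_cancel, inv_inv]

lemma X_le_iff_w_le (hs : 0 < s) (hκt : 0 < κ * t) (hγ : 0 < γ) (hc : 0 < c) (hγc : γ < c⁻¹)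
    {y : ℝ} (hy : 0 ≤ y) : X s κ γ c t ≤ y ↔ w s κ γ t y ≤ c := by
  have hX : 0 < X s κ γ c t := X_pos hκt (by linarith)
  rw [← Real.rpow_le_rpow_iff hX.le hy (by positivity : 0 < 2 * s), X_rpow hs hκt (by linarith),
    w, inv_le_comm₀ (by positivity) hc, ← sub_le_iff_le_add, le_div_iff₀ hκt]

lemma w_le_of_X_le (hs : 0 < s) (hκt : 0 < κ * t) (hγ : 0 < γ) (hc : 0 < c) (hγc : γ < c⁻¹)
    {y : ℝ} (hy : X s κ γ c t ≤ y) : w s κ γ t y ≤ c :=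
  (X_le_iff_w_le hs hκt hγ hc hγc ((X_pos hκt (by linarith)).le.trans hy)).1 hy

lemma le_w_of_le_X (hs : 0 < s) (hκt : 0 < κ * t) (hγ : 0 < γ) (hγc : γ < c⁻¹)
    {y : ℝ} (hy0 : 0 ≤ y) (hy : y ≤ X s κ γ c t) : c ≤ w s κ γ t y := by
  simpa only [w_X hs hκt hγc] using
    w_antitoneOn hs hκt hγ hy0 (X_pos hκt (by linarith)).le hy

lemma tendsto_X_atTop (hs : 0 < s) (hκ : 0 < κ) (hγc : γ < c⁻¹) :
    Tendsto (X s κ γ c) atTop atTop :=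
  ((tendsto_rpow_atTop (by positivity)).comp (tendsto_id.const_mul_atTop hκ)).const_mul_atTop
    (Real.rpow_pos_of_pos (sub_pos.2 hγc) _)

lemma three_mul_rpow_mul_w_sq_div_le (hκ : 0 < κ) (ht : 0 < t) (hγ : 0 < γ) {x : ℝ}
    (hx : 0 ≤ x) : 3 * x ^ (2 * s) * w s κ γ t x ^ 2 / (κ * t ^ 2) ≤ 3 / (γ * t) := by
  have hκt : 0 < κ * t := mul_pos hκ ht
  calc 3 * x ^ (2 * s) * w s κ γ t x ^ 2 / (κ * t ^ 2)
      = 3 * ((1 - γ * w s κ γ t x) * w s κ γ t x) / t := by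
        rw [← w_mul_rpow_div hκt hγ hx]; field_simp
    _ ≤ 3 * (1 / γ) / t := by
        gcongr
        rw [le_div_iff₀ hγ]
        nlinarith [sq_nonneg (γ * w s κ γ t x - 1)]
    _ = 3 / (γ * t) := by field_simp

end profile

noncomputable def ubarRight (s κ γ ε t y : ℝ) : ℝ := ε - (ε - w s κ γ t y) ^ 3 / ε ^ 2

noncomputable def ubarRightDeriv (s κ γ ε t y : ℝ) : ℝ :=
  -(6 * s * (ε - w s κ γ t y) ^ 2 * w s κ γ t y * (1 - γ * w s κ γ t y)) / (ε ^ 2 * y)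

noncomputable def ubarRightDeriv2 (s κ γ ε t y : ℝ) : ℝ :=
  6 * s * (ε - w s κ γ t y) * w s κ γ t y * (1 - γ * w s κ γ t y) / (ε ^ 2 * y ^ 2) *
    ((1 - 2 * s) * (ε - w s κ γ t y) - 4 * s * (1 - γ * w s κ γ t y) * (2 * w s κ γ t y - ε))

section derivatives

variable {s κ γ ε t y : ℝ}

lemma hasDerivAt_w (hκt : 0 < κ * t) (hγ : 0 < γ) (hy : 0 < y) :
    HasDerivAt (w s κ γ t) (-(2 * s * w s κ γ t y * (1 - γ * w s κ γ t y)) / y) y := by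
  have hQ : y ^ (2 * s) / (κ * t) + γ ≠ 0 := by positivity
  have hpow : HasDerivAt (fun y : ℝ => y ^ (2 * s)) (2 * s * y ^ (2 * s - 1)) y :=
    Real.hasDerivAt_rpow_const (Or.inl hy.ne')
  refine (((hpow.div_const (κ * t)).add_const γ).inv hQ).congr_deriv ?_
  rw [← w_mul_rpow_div hκt hγ hy.le, Real.rpow_sub_one hy.ne']
  unfold w
  field_simp

lemma hasDerivAt_ubarRight (hκt : 0 < κ * t) (hγ : 0 < γ) (hε : 0 < ε) (hy : 0 < y) :
    HasDerivAt (ubarRight s κ γ ε t) (ubarRightDeriv s κ γ ε t y) y := by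
  refine ((((hasDerivAt_w hκt hγ hy).const_sub ε).pow 3 |>.div_const (ε ^ 2)).const_sub
    ε).congr_deriv ?_
  unfold ubarRightDeriv
  field_simp
  ring

lemma hasDerivAt_ubarRightDeriv (hκt : 0 < κ * t) (hγ : 0 < γ) (hε : 0 < ε) (hy : 0 < y) :
    HasDerivAt (ubarRightDeriv s κ γ ε t) (ubarRightDeriv2 s κ γ ε t y) y := by
  have hw := hasDerivAt_w (s := s) hκt hγ hy
  have hnum := (((((hw.const_sub ε).pow 2).const_mul (6 * s)).mul hw).mul
    ((hw.const_mul γ).const_sub 1)).neg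
  refine (hnum.div ((hasDerivAt_id y).const_mul (ε ^ 2)) (by positivity)).congr_deriv ?_
  simp only [ubarRightDeriv2, Pi.mul_apply, Pi.pow_apply, Pi.neg_apply, id]
  field_simp
  ring

end derivatives

noncomputable def ubarDeriv (s κ γ ε t y : ℝ) : ℝ :=
  if y ≤ X s κ γ ε t then 0 else ubarRightDeriv s κ γ ε t y

section ubar

variable {s κ γ ε t y : ℝ}

lemma ubar_eq_ubarRight (hs : 0 < s) (hκt : 0 < κ * t) (hε : 0 < ε) (hγε : γ < ε⁻¹)
    (hy : X s κ γ ε t ≤ y) : ubar s κ γ ε t y = ubarRight s κ γ ε t y := by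
  rcases hy.eq_or_lt with rfl | hlt
  · simp [ubar, ubarRight, w_X hs hκt hγε]
  · rw [ubar, if_neg hlt.not_ge, ubarRight]
    field_simp
    ring

lemma ubarDeriv_eq_ubarRightDeriv (hs : 0 < s) (hκt : 0 < κ * t) (hγε : γ < ε⁻¹)
    (hy : X s κ γ ε t ≤ y) : ubarDeriv s κ γ ε t y = ubarRightDeriv s κ γ ε t y := by
  rcases hy.eq_or_lt with rfl | hlt
  · simp [ubarDeriv, ubarRightDeriv, w_X hs hκt hγε]
  · rw [ubarDeriv, if_neg hlt.not_ge]

lemma hasDerivAt_ubar (hs : 0 < s) (hκt : 0 < κ * t) (hγ : 0 < γ) (hε : 0 < ε)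
    (hγε : γ < ε⁻¹) (y : ℝ) : HasDerivAt (ubar s κ γ ε t) (ubarDeriv s κ γ ε t y) y := by
  have hX : 0 < X s κ γ ε t := X_pos hκt (by linarith)
  rcases lt_trichotomy y (X s κ γ ε t) with hlt | rfl | hgt
  · rw [ubarDeriv, if_pos hlt.le]
    refine (hasDerivAt_const y ε).congr_of_eventuallyEq ?_
    filter_upwards [Iio_mem_nhds hlt] with v hv using if_pos hv.le
  · have hleft : HasDerivWithinAt (ubar s κ γ ε t) 0 (Iic (X s κ γ ε t)) (X s κ γ ε t) :=
      (hasDerivWithinAt_const _ _ ε).congr (fun v hv => if_pos hv) (if_pos le_rfl)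
    have hright : HasDerivWithinAt (ubar s κ γ ε t) 0 (Ici (X s κ γ ε t)) (X s κ γ ε t) := by
      have h := (hasDerivAt_ubarRight (s := s) hκt hγ hε hX).hasDerivWithinAt
        (s := Ici (X s κ γ ε t))
      rw [← ubarDeriv_eq_ubarRightDeriv hs hκt hγε le_rfl, ubarDeriv, if_pos le_rfl] at h
      exact h.congr (fun v hv => ubar_eq_ubarRight hs hκt hε hγε hv)
        (ubar_eq_ubarRight hs hκt hε hγε le_rfl)
    rw [ubarDeriv, if_pos le_rfl, ← hasDerivWithinAt_univ, ← Iic_union_Ici]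
    exact hleft.union hright
  · rw [ubarDeriv_eq_ubarRightDeriv hs hκt hγε hgt.le]
    refine (hasDerivAt_ubarRight hκt hγ hε (hX.trans hgt)).congr_of_eventuallyEq ?_
    filter_upwards [Ioi_mem_nhds hgt] with v hv using ubar_eq_ubarRight hs hκt hε hγε hv.le

lemma ubar_mem_Icc (hs : 0 < s) (hκt : 0 < κ * t) (hγ : 0 < γ) (hε : 0 < ε) (hγε : γ < ε⁻¹)
    (y : ℝ) : ubar s κ γ ε t y ∈ Icc 0 ε := by
  by_cases hy : y ≤ X s κ γ ε t
  · rw [ubar, if_pos hy]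
    exact ⟨hε.le, le_rfl⟩
  · have hX : 0 < X s κ γ ε t := X_pos hκt (by linarith)
    have hw0 := w_pos (s := s) hκt hγ (hX.trans (not_le.1 hy)).le
    have hwε := w_le_of_X_le hs hκt hγ hε hγε (le_of_not_ge hy)
    have hcube : (ε - w s κ γ t y) ^ 3 ≤ ε ^ 3 := by gcongr; linarith
    rw [ubar_eq_ubarRight hs hκt hε hγε (le_of_not_ge hy), ubarRight]
    constructor
    · rw [sub_nonneg, div_le_iff₀ (by positivity)]
      linarith [show ε ^ 3 = ε * ε ^ 2 by ring]
    · have : 0 ≤ (ε - w s κ γ t y) ^ 3 / ε ^ 2 := by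
        have : 0 ≤ ε - w s κ γ t y := by linarith
        positivity
      linarith

lemma sub_cube_le_ubar (hs : 0 < s) (hκt : 0 < κ * t) (hγ : 0 < γ) (hε : 0 < ε) {η : ℝ}
    (hη : 0 ≤ η) (hηε : η < ε) (hγε : γ < ε⁻¹) (hy : y ≤ X s κ γ (ε - η) t) :
    ε - η ^ 3 / ε ^ 2 ≤ ubar s κ γ ε t y := by
  have hγε' : γ < (ε - η)⁻¹ := hγε.trans_le (inv_anti₀ (by linarith) (by linarith))
  by_cases hyX : y ≤ X s κ γ ε t
  · rw [ubar, if_pos hyX]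
    have : 0 ≤ η ^ 3 / ε ^ 2 := by positivity
    linarith
  · have hy0 : 0 ≤ y := (X_pos hκt (by linarith)).le.trans (le_of_not_ge hyX)
    have hwη := le_w_of_le_X hs hκt hγ hγε' hy0 hy
    have hwε := w_le_of_X_le hs hκt hγ hε hγε (le_of_not_ge hyX)
    rw [ubar_eq_ubarRight hs hκt hε hγε (le_of_not_ge hyX), ubarRight]
    gcongr
    linarith

end ubar

lemma mul_sq_le_add_sub_two_mul {F G : ℝ → ℝ} {L x z : ℝ} (hz : 0 ≤ z)
    (hF : ∀ y ∈ Icc (x - z) (x + z), HasDerivAt F (G y) y)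
    (hG : MonotoneOn (fun y => G y - L * y) (Icc (x - z) (x + z))) :
    L * z ^ 2 ≤ F (x + z) + F (x - z) - 2 * F x := by
  have hH : ∀ y ∈ Icc (x - z) (x + z),
      HasDerivAt (fun y => F y - L / 2 * y ^ 2) (G y - L * y) y := fun y hy => by
    refine ((hF y hy).sub ((hasDerivAt_pow 2 y).const_mul (L / 2))).congr_deriv ?_
    push_cast
    ring
  have hconv : ConvexOn ℝ (Icc (x - z) (x + z)) (fun y => F y - L / 2 * y ^ 2) :=
    MonotoneOn.convexOn_of_deriv (convex_Icc _ _)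
      (fun y hy => (hH y hy).continuousAt.continuousWithinAt)
      (fun y hy => (hH y (interior_subset hy)).differentiableAt.differentiableWithinAt)
      (fun a ha b hb hab => by
        rw [(hH a (interior_subset ha)).deriv, (hH b (interior_subset hb)).deriv]
        exact hG (interior_subset ha) (interior_subset hb) hab)
  have hmid := hconv.2 (left_mem_Icc.2 (by linarith)) (right_mem_Icc.2 (by linarith))
    (by norm_num : (0 : ℝ) ≤ 1 / 2) (by norm_num : (0 : ℝ) ≤ 1 / 2) (by norm_num)
  simp only [smul_eq_mul, show 1 / 2 * (x - z) + 1 / 2 * (x + z) = x by ring] at hmid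
  linear_combination 2 * hmid

section secondDifference

variable {s κ γ ε t y : ℝ}

lemma neg_le_ubarRightDeriv2 (hs : 0 < s) (hs2 : s < 1 / 2) (hκt : 0 < κ * t) (hγ : 0 < γ)
    (hε : 0 < ε) (hy : 0 < y) (hwε : w s κ γ t y ≤ ε) :
    -(12 * s * ε / y ^ 2) ≤ ubarRightDeriv2 s κ γ ε t y := by
  have hv := w_pos (s := s) hκt hγ hy.le
  have hu : 0 ≤ 1 - γ * w s κ γ t y := by
    rw [← w_mul_rpow_div hκt hγ hy.le]; positivity
  set v := w s κ γ t y
  have hP0 : 0 ≤ 6 * s * (ε - v) * v * (1 - γ * v) / (ε ^ 2 * y ^ 2) := by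
    have : 0 ≤ ε - v := by linarith
    positivity
  have hP : 6 * s * (ε - v) * v * (1 - γ * v) / (ε ^ 2 * y ^ 2) ≤ 6 * s / y ^ 2 := by
    rw [div_le_div_iff₀ (by positivity) (by positivity)]
    have : (ε - v) * v * (1 - γ * v) ≤ ε ^ 2 := by
      nlinarith [mul_nonneg (mul_nonneg hv.le (by linarith : 0 ≤ ε - v)) (by nlinarith : 0 ≤ γ * v)]
    nlinarith [mul_nonneg (mul_nonneg hs.le (sq_nonneg y)) (sub_nonneg.2 this)]
  have hQ : -(2 * ε) ≤ (1 - 2 * s) * (ε - v) - 4 * s * (1 - γ * v) * (2 * v - ε) := by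
    nlinarith [mul_nonneg hs.le hu, mul_nonneg (mul_nonneg hs.le hu) (by linarith : 0 ≤ ε - v),
      mul_nonneg (mul_nonneg hs.le (by nlinarith : 0 ≤ γ * v)) hv.le]
  calc -(12 * s * ε / y ^ 2) = 6 * s / y ^ 2 * -(2 * ε) := by ring
    _ ≤ 6 * s * (ε - v) * v * (1 - γ * v) / (ε ^ 2 * y ^ 2) * -(2 * ε) :=
        mul_le_mul_of_nonpos_right hP (by linarith)
    _ ≤ ubarRightDeriv2 s κ γ ε t y := mul_le_mul_of_nonneg_left hQ hP0

lemma le_ubarRightDeriv2_of_w_le_half (hs : 0 < s) (hs2 : s < 1 / 2) (hκt : 0 < κ * t)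
    (hγ : 0 < γ) (hε : 0 < ε) (hγε : γ < ε⁻¹) (hy : 0 < y) (hw : w s κ γ t y ≤ ε / 2) :
    3 / 2 * s * (1 - 2 * s) * (1 - γ * ε) * w s κ γ t y / y ^ 2 ≤
      ubarRightDeriv2 s κ γ ε t y := by
  have hv := w_pos (s := s) hκt hγ hy.le
  have hγε1 : γ * ε < 1 := by
    simpa only [inv_mul_cancel₀ hε.ne'] using mul_lt_mul_of_pos_right hγε hε
  set v := w s κ γ t y
  have hu : 1 - γ * ε ≤ 1 - γ * v := by nlinarith
  have hP : 3 * s * (1 - γ * ε) * v / (ε * y ^ 2) ≤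
      6 * s * (ε - v) * v * (1 - γ * v) / (ε ^ 2 * y ^ 2) := by
    rw [div_le_div_iff₀ (by positivity) (by positivity)]
    have : (1 - γ * ε) * ε ≤ 2 * (ε - v) * (1 - γ * v) := by nlinarith
    have h := mul_le_mul_of_nonneg_left this
      (by positivity : 0 ≤ 3 * s * v * (ε * y ^ 2))
    nlinarith [h]
  have hQ : (1 - 2 * s) * (ε / 2) ≤
      (1 - 2 * s) * (ε - v) - 4 * s * (1 - γ * v) * (2 * v - ε) := by
    nlinarith [mul_nonneg (mul_nonneg hs.le (by linarith : 0 ≤ 1 - γ * v))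
      (by linarith : 0 ≤ ε - 2 * v)]
  calc 3 / 2 * s * (1 - 2 * s) * (1 - γ * ε) * v / y ^ 2
      = 3 * s * (1 - γ * ε) * v / (ε * y ^ 2) * ((1 - 2 * s) * (ε / 2)) := by
        field_simp
    _ ≤ ubarRightDeriv2 s κ γ ε t y :=
        mul_le_mul hP hQ (by nlinarith) (le_trans (by positivity) hP)


lemma monotone_ubarDeriv_add_mul (hs : 0 < s) (hs2 : s < 1 / 2) (hκt : 0 < κ * t) (hγ : 0 < γ)
    (hε : 0 < ε) (hγε : γ < ε⁻¹) :
    Monotone fun y => ubarDeriv s κ γ ε t y + 12 * s * ε / X s κ γ ε t ^ 2 * y := by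
  have hX : 0 < X s κ γ ε t := X_pos hκt (by linarith)
  set M := 12 * s * ε / X s κ γ ε t ^ 2
  have hM : 0 ≤ M := by positivity
  have hleft : MonotoneOn (fun y => ubarDeriv s κ γ ε t y + M * y) (Iic (X s κ γ ε t)) :=
    fun a ha b hb hab => by
      simp only [ubarDeriv, if_pos (show a ≤ X s κ γ ε t from ha),
        if_pos (show b ≤ X s κ γ ε t from hb), zero_add]
      exact mul_le_mul_of_nonneg_left hab hM
  have hderiv : ∀ y ∈ Ici (X s κ γ ε t), HasDerivAt (fun y => ubarRightDeriv s κ γ ε t y + M * y)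
      (ubarRightDeriv2 s κ γ ε t y + M * 1) y := fun y hy =>
    (hasDerivAt_ubarRightDeriv hκt hγ hε (hX.trans_le hy)).add ((hasDerivAt_id y).const_mul M)
  have hright : MonotoneOn (fun y => ubarRightDeriv s κ γ ε t y + M * y) (Ici (X s κ γ ε t)) := by
    refine monotoneOn_of_hasDerivWithinAt_nonneg (convex_Ici _)
      (fun y hy => (hderiv y hy).continuousAt.continuousWithinAt)
      (fun y hy => (hderiv y (interior_subset hy)).hasDerivWithinAt) fun y hy => ?_
    rw [interior_Ici] at hy
    have hy0 : 0 < y := hX.trans hy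
    have hbound : 12 * s * ε / y ^ 2 ≤ M :=
      div_le_div_of_nonneg_left (by positivity) (by positivity) (pow_le_pow_left₀ hX.le hy.le 2)
    linarith [neg_le_ubarRightDeriv2 hs hs2 hκt hγ hε hy0 (w_le_of_X_le hs hκt hγ hε hγε hy.le)]
  have hright' : MonotoneOn (fun y => ubarDeriv s κ γ ε t y + M * y) (Ici (X s κ γ ε t)) :=
    hright.congr fun y hy => by simp only [ubarDeriv_eq_ubarRightDeriv hs hκt hγε hy]
  rw [← monotoneOn_univ, ← Iic_union_Ici]
  exact hleft.union_right hright' isGreatest_Iic isLeast_Ici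

lemma neg_mul_sq_le_secondDiff_ubar (hs : 0 < s) (hs2 : s < 1 / 2) (hκt : 0 < κ * t)
    (hγ : 0 < γ) (hε : 0 < ε) (hγε : γ < ε⁻¹) (x : ℝ) {z : ℝ} (hz : 0 ≤ z) :
    -(12 * s * ε / X s κ γ ε t ^ 2 * z ^ 2) ≤
      ubar s κ γ ε t (x + z) + ubar s κ γ ε t (x - z) - 2 * ubar s κ γ ε t x := by
  rw [← neg_mul]
  refine mul_sq_le_add_sub_two_mul hz (fun y _ => hasDerivAt_ubar hs hκt hγ hε hγε y) ?_
  simpa only [neg_mul, sub_neg_eq_add] using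
    (monotone_ubarDeriv_add_mul hs hs2 hκt hγ hε hγε).monotoneOn _

lemma exists_pos_mul_sq_le_secondDiff_ubar (hs : 0 < s) (hs2 : s < 1 / 2) (hκt : 0 < κ * t)
    (hγ : 0 < γ) (hε : 0 < ε) (hγε : γ < ε⁻¹) {x : ℝ} (hx : X s κ γ (ε / 2) t + 1 ≤ x) :
    ∃ c > 0, ∀ z ∈ Icc (0 : ℝ) 1,
      c * z ^ 2 ≤ ubar s κ γ ε t (x + z) + ubar s κ γ ε t (x - z) - 2 * ubar s κ γ ε t x := by
  have hγε1 : γ * ε < 1 := by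
    simpa only [inv_mul_cancel₀ hε.ne'] using mul_lt_mul_of_pos_right hγε hε
  have hγε2 : γ < (ε / 2)⁻¹ := hγε.trans_le (inv_anti₀ (by positivity) (by linarith))
  have hx0 : 0 < x - 1 := (X_pos (s := s) (c := ε / 2) hκt (sub_pos.2 hγε2)).trans_le (by linarith)
  have hwin : ∀ y ∈ Icc (x - 1) (x + 1), X s κ γ ε t ≤ y ∧ w s κ γ t y ≤ ε / 2 := by
    intro y hy
    have hw := w_le_of_X_le hs hκt hγ (by positivity) hγε2 (show _ ≤ y by linarith [hy.1])
    exact ⟨(X_le_iff_w_le hs hκt hγ hε hγε (by linarith [hy.1])).2 (by linarith), hw⟩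
  have hK : 0 ≤ 3 / 2 * s * (1 - 2 * s) * (1 - γ * ε) := by
    have : 0 ≤ 1 - 2 * s := by linarith
    have : 0 ≤ 1 - γ * ε := by linarith
    positivity
  have hc : 0 < 3 / 2 * s * (1 - 2 * s) * (1 - γ * ε) * w s κ γ t (x + 1) / (x + 1) ^ 2 := by
    have h2s : 0 < 1 - 2 * s := by linarith
    have hγε' : 0 < 1 - γ * ε := by linarith
    have hw := w_pos (s := s) hκt hγ (show 0 ≤ x + 1 by linarith)
    exact div_pos (mul_pos (mul_pos (mul_pos (mul_pos (by norm_num) hs) h2s) hγε') hw)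
      (pow_pos (by linarith) 2)
  have hcle : ∀ y ∈ Icc (x - 1) (x + 1),
      3 / 2 * s * (1 - 2 * s) * (1 - γ * ε) * w s κ γ t (x + 1) / (x + 1) ^ 2 ≤
        ubarRightDeriv2 s κ γ ε t y := fun y hy => by
    have hy0 : 0 < y := by linarith [hy.1]
    refine le_trans ?_ (le_ubarRightDeriv2_of_w_le_half hs hs2 hκt hγ hε hγε hy0 (hwin y hy).2)
    exact div_le_div₀ (mul_nonneg hK (w_pos hκt hγ hy0.le).le)
      (mul_le_mul_of_nonneg_left
        (w_antitoneOn hs hκt hγ hy0.le (show (0 : ℝ) ≤ x + 1 by linarith) hy.2) hK)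
      (by positivity) (pow_le_pow_left₀ hy0.le hy.2 2)
  set c := 3 / 2 * s * (1 - 2 * s) * (1 - γ * ε) * w s κ γ t (x + 1) / (x + 1) ^ 2
  have hderiv : ∀ y ∈ Icc (x - 1) (x + 1), HasDerivAt (fun y => ubarRightDeriv s κ γ ε t y - c * y)
      (ubarRightDeriv2 s κ γ ε t y - c * 1) y := fun y hy =>
    (hasDerivAt_ubarRightDeriv hκt hγ hε (by linarith [hy.1])).sub ((hasDerivAt_id y).const_mul c)
  have hmono : MonotoneOn (fun y => ubarRightDeriv s κ γ ε t y - c * y) (Icc (x - 1) (x + 1)) :=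
    monotoneOn_of_hasDerivWithinAt_nonneg (convex_Icc _ _)
      (fun y hy => (hderiv y hy).continuousAt.continuousWithinAt)
      (fun y hy => (hderiv y (interior_subset hy)).hasDerivWithinAt)
      fun y hy => by linarith [hcle y (interior_subset hy)]
  have hmono' : MonotoneOn (fun y => ubarDeriv s κ γ ε t y - c * y) (Icc (x - 1) (x + 1)) :=
    hmono.congr fun y hy => by simp only [ubarDeriv_eq_ubarRightDeriv hs hκt hγε (hwin y hy).1]
  exact ⟨c, hc, fun z hz => mul_sq_le_add_sub_two_mul hz.1
    (fun y _ => hasDerivAt_ubar hs hκt hγ hε hγε y)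
    (hmono'.mono (Icc_subset_Icc (by linarith [hz.2]) (by linarith [hz.2])))⟩

end secondDifference

lemma integrableOn_mul_of_le {g k J : ℝ → ℝ} {S : Set ℝ} {c : ℝ} (hS : MeasurableSet S)
    (hc : 0 < c) (hg : ContinuousOn g S) (hk : ContinuousOn k S) (hk0 : ∀ z ∈ S, 0 < k z)
    (hkg : ∀ z ∈ S, c * k z ≤ g z) (hint : IntegrableOn (fun z => g z * J z) S) :
    IntegrableOn (fun z => k z * J z) S := by
  have hg0 : ∀ z ∈ S, 0 < g z := fun z hz => (mul_pos hc (hk0 z hz)).trans_le (hkg z hz)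
  have hbound : ∀ᵐ z ∂(volume.restrict S), ‖k z / g z‖ ≤ c⁻¹ := by
    refine (ae_restrict_iff' hS).2 (ae_of_all _ fun z hz => ?_)
    rw [Real.norm_of_nonneg (div_nonneg (hk0 z hz).le (hg0 z hz).le),
      div_le_iff₀ (hg0 z hz), ← div_eq_inv_mul, le_div_iff₀ hc, mul_comm]
    exact hkg z hz
  refine IntegrableOn.congr_fun (hint.bdd_mul
    ((hk.div hg fun z hz => (hg0 z hz).ne').aestronglyMeasurable hS) hbound) (fun z hz => ?_) hS
  simp only [Pi.div_apply]
  field_simp [(hg0 z hz).ne']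

lemma neg_le_setIntegral_Ioi_of_le_rpow {δ J : ℝ → ℝ} {s J0 K A : ℝ} (hs : 0 < s) (hA : 1 ≤ A)
    (hJ : ∀ z, 0 ≤ J z) (hJub : ∀ z, 1 ≤ z → J z ≤ J0 * z ^ (-(1 + 2 * s)))
    (hδ : ∀ z, -K ≤ δ z) (hK : 0 ≤ K) (hint : IntegrableOn (fun z => δ z * J z) (Ioi A)) :
    -(K * J0 * A ^ (-(2 * s)) / (2 * s)) ≤ ∫ z in Ioi A, δ z * J z := by
  have hA0 : 0 < A := by linarith
  have hpow : IntegrableOn (fun z : ℝ => z ^ (-(1 + 2 * s))) (Ioi A) :=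
    integrableOn_Ioi_rpow_of_lt (by linarith) hA0
  have hval : ∫ z in Ioi A, -(K * J0 * z ^ (-(1 + 2 * s))) =
      -(K * J0 * A ^ (-(2 * s)) / (2 * s)) := by
    rw [integral_neg, integral_const_mul, integral_Ioi_rpow_of_lt (by linarith) hA0,
      show -(1 + 2 * s) + 1 = -(2 * s) by ring, neg_div_neg_eq, mul_div_assoc]
  rw [← hval]
  refine setIntegral_mono_on (hpow.const_mul (K * J0)).neg hint measurableSet_Ioi fun z hz => ?_
  have hz : A < z := hz
  have h1 := mul_le_mul_of_nonneg_right (hδ z) (hJ z)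
  have h2 := mul_le_mul_of_nonneg_left (hJub z (by linarith)) hK
  linarith

lemma neg_le_setIntegral_Ioc_of_le {δ J : ℝ → ℝ} {s J0 M A : ℝ} (hs : 0 ≤ s) (hM : 0 ≤ M)
    (hA : 1 ≤ A) (hJ : ∀ z, 0 ≤ J z) (hJub : ∀ z, 1 ≤ z → J z ≤ J0 * z ^ (-(1 + 2 * s)))
    (hδ : ∀ z, 0 < z → -(M * z ^ 2) ≤ δ z) (hint : IntegrableOn (fun z => δ z * J z) (Ioc 1 A)) :
    -(M * (J0 * A ^ 3)) ≤ ∫ z in Ioc 1 A, δ z * J z := by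
  have hJ0 : 0 ≤ J0 := by
    have := (hJ 1).trans (hJub 1 le_rfl); rwa [Real.one_rpow, mul_one] at this
  have hmono := setIntegral_mono_on (integrableOn_const (C := -(M * A ^ 2 * J0))
    measure_Ioc_lt_top.ne) hint measurableSet_Ioc fun z hz => ?_
  · rw [setIntegral_const, Real.volume_real_Ioc_of_le hA, smul_eq_mul] at hmono
    refine le_trans ?_ hmono
    nlinarith [mul_nonneg (mul_nonneg hM hJ0) (sq_nonneg A)]
  · have hz1 : 1 ≤ z := hz.1.le
    have hJz : J z ≤ J0 := (hJub z hz1).trans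
      (mul_le_of_le_one_right hJ0 (Real.rpow_le_one_of_one_le_of_nonpos hz1 (by linarith)))
    have h1 := mul_le_mul_of_nonneg_right (hδ z (by linarith)) (hJ z)
    have h2 : z ^ 2 * J z ≤ A ^ 2 * J0 :=
      mul_le_mul (pow_le_pow_left₀ (by linarith) hz.2 2) hJz (hJ z) (sq_nonneg A)
    nlinarith [mul_le_mul_of_nonneg_left h2 hM]

lemma neg_le_setIntegral_Ioi_zero {δ J : ℝ → ℝ} {s J0 M K A : ℝ} (hs : 0 < s) (hM : 0 ≤ M)
    (hK : 0 ≤ K) (hA : 1 ≤ A) (hJ : ∀ z, 0 ≤ J z)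
    (hJub : ∀ z, 1 ≤ z → J z ≤ J0 * z ^ (-(1 + 2 * s)))
    (hJint : IntegrableOn (fun z => z ^ 2 * J z) (Ioc 0 1))
    (hδM : ∀ z, 0 < z → -(M * z ^ 2) ≤ δ z) (hδK : ∀ z, -K ≤ δ z) :
    -(M * ((∫ z in Ioc 0 1, z ^ 2 * J z) + J0 * A ^ 3) + K * J0 * A ^ (-(2 * s)) / (2 * s)) ≤
      ∫ z in Ioi 0, δ z * J z := by
  have hJ0 : 0 ≤ J0 := by
    have := (hJ 1).trans (hJub 1 le_rfl); rwa [Real.one_rpow, mul_one] at this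
  have hB : 0 ≤ ∫ z in Ioc 0 1, z ^ 2 * J z :=
    setIntegral_nonneg measurableSet_Ioc fun z _ => mul_nonneg (sq_nonneg z) (hJ z)
  by_cases hint : IntegrableOn (fun z => δ z * J z) (Ioi 0)
  · have hnear : -(M * ∫ z in Ioc 0 1, z ^ 2 * J z) ≤ ∫ z in Ioc 0 1, δ z * J z := by
      rw [← integral_const_mul, ← integral_neg]
      refine setIntegral_mono_on (hJint.const_mul M).neg (hint.mono_set Ioc_subset_Ioi_self)
        measurableSet_Ioc fun z hz => ?_
      nlinarith [mul_le_mul_of_nonneg_right (hδM z hz.1) (hJ z)]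
    have hmid := neg_le_setIntegral_Ioc_of_le hs.le hM hA hJ hJub hδM
      (hint.mono_set (Ioc_subset_Ioi_self.trans (Ioi_subset_Ioi zero_le_one)))
    have hfar := neg_le_setIntegral_Ioi_of_le_rpow hs hA hJ hJub hδK hK
      (hint.mono_set (Ioi_subset_Ioi (by linarith)))
    rw [← Ioc_union_Ioi_eq_Ioi zero_le_one, setIntegral_union (Ioc_disjoint_Ioi le_rfl)
      measurableSet_Ioi (hint.mono_set Ioc_subset_Ioi_self)
      (hint.mono_set (Ioi_subset_Ioi zero_le_one)), ← Ioc_union_Ioi_eq_Ioi hA,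
      setIntegral_union (Ioc_disjoint_Ioi le_rfl) measurableSet_Ioi
      (hint.mono_set (Ioc_subset_Ioi_self.trans (Ioi_subset_Ioi zero_le_one)))
      (hint.mono_set (Ioi_subset_Ioi (by linarith)))]
    linarith
  · rw [integral_undef hint, neg_nonpos]
    have : 0 ≤ A ^ (-(2 * s)) := Real.rpow_nonneg (by linarith) _
    positivity

lemma Ignition.exists_pos_le {θ : ℝ} {f : ℝ → ℝ} (hf : Ignition θ f) (hθ : 0 ≤ θ) {a b : ℝ}
    (ha : θ < a) (hab : a ≤ b) (hb : b < 1) : ∃ m > 0, ∀ v ∈ Icc a b, m ≤ f v := by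
  obtain ⟨⟨K, hK⟩, -, hpos, -⟩ := hf
  obtain ⟨v, hv, hmin⟩ := isCompact_Icc.exists_isMinOn (nonempty_Icc.2 hab)
    (hK.continuousOn.mono (Icc_subset_Icc (by linarith) hb.le))
  exact ⟨f v, hpos v (by linarith [hv.1]) (by linarith [hv.2]), fun u hu => hmin hu⟩

lemma HypH.le_mul_rpow {s J0 J1 R0 : ℝ} {J : ℝ → ℝ} (hJ : HypH s J0 J1 R0 J) {z : ℝ}
    (hz : 1 ≤ z) : J z ≤ J0 * z ^ (-(1 + 2 * s)) := by
  simpa only [abs_of_pos (zero_lt_one.trans_le hz)] using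
    hJ.2.2.2.2.2.2.1 z (by rwa [abs_of_pos (zero_lt_one.trans_le hz)])

section dispersion

variable {s κ γ ε : ℝ} {J : ℝ → ℝ}

lemma integrableOn_sq_mul_of_frequently_Dop_ne_zero (hs : 0 < s) (hs2 : s < 1 / 2) {t : ℝ}
    (hκt : 0 < κ * t) (hγ : 0 < γ) (hε : 0 < ε) (hγε : γ < ε⁻¹)
    (hD : ∃ᶠ x in atTop, Dop J (ubar s κ γ ε) t x ≠ 0) :
    IntegrableOn (fun z => z ^ 2 * J z) (Ioc 0 1) := by
  obtain ⟨x, hD, hx⟩ := (hD.and_eventually (eventually_ge_atTop (X s κ γ (ε / 2) t + 1))).exists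
  obtain ⟨c, hc, hcz⟩ := exists_pos_mul_sq_le_secondDiff_ubar hs hs2 hκt hγ hε hγε hx
  have hint : IntegrableOn (fun z => (ubar s κ γ ε t (x + z) + ubar s κ γ ε t (x - z) -
      2 * ubar s κ γ ε t x) * J z) (Ioi 0) := by
    by_contra hint
    exact hD (integral_undef hint)
  have hcont : Continuous (ubar s κ γ ε t) := continuous_iff_continuousAt.2 fun y =>
    (hasDerivAt_ubar hs hκt hγ hε hγε y).continuousAt
  exact integrableOn_mul_of_le measurableSet_Ioc hc (by fun_prop) (by fun_prop)
    (fun z hz => pow_pos hz.1 2) (fun z hz => hcz z (Ioc_subset_Icc_self hz))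
    (hint.mono_set Ioc_subset_Ioi_self)

lemma eventually_neg_le_Dop (hs : 0 < s) (hs2 : s < 1 / 2) (hκ : 0 < κ) (hγ : 0 < γ) (hε : 0 < ε)
    (hγε : γ < ε⁻¹) {J0 : ℝ} (hJ : ∀ z, 0 ≤ J z)
    (hJub : ∀ z, 1 ≤ z → J z ≤ J0 * z ^ (-(1 + 2 * s)))
    (hJint : IntegrableOn (fun z => z ^ 2 * J z) (Ioc 0 1)) {m : ℝ} (hm : 0 < m) :
    ∀ᶠ t in atTop, ∀ x, -m ≤ Dop J (ubar s κ γ ε) t x := by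
  obtain ⟨A, hA1, hA⟩ : ∃ A : ℝ, 1 ≤ A ∧ 2 * ε * J0 * A ^ (-(2 * s)) / (2 * s) ≤ m / 2 := by
    have : Tendsto (fun A : ℝ => 2 * ε * J0 * A ^ (-(2 * s)) / (2 * s)) atTop (𝓝 0) := by
      simpa using ((tendsto_rpow_neg_atTop (by positivity)).const_mul (2 * ε * J0)).div_const
        (2 * s)
    exact ((eventually_ge_atTop 1).and (this.eventually (ge_mem_nhds (half_pos hm)))).exists
  set B := (∫ z in Ioc 0 1, z ^ 2 * J z) + J0 * A ^ 3
  have hM : Tendsto (fun t => 12 * s * ε / X s κ γ ε t ^ 2 * B) atTop (𝓝 0) := by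
    simpa using (tendsto_const_nhds.div_atTop
      ((tendsto_pow_atTop two_ne_zero).comp (tendsto_X_atTop hs hκ hγε))).mul_const B
  filter_upwards [hM.eventually (ge_mem_nhds (half_pos hm)), eventually_gt_atTop 0]
    with t hMt ht x
  have hκt := mul_pos hκ ht
  have hbound := neg_le_setIntegral_Ioi_zero hs (M := 12 * s * ε / X s κ γ ε t ^ 2)
    (by positivity) (by positivity : 0 ≤ 2 * ε) hA1 hJ hJub hJint
    (fun z hz => neg_mul_sq_le_secondDiff_ubar hs hs2 hκt hγ hε hγε x hz.le) fun z => by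
      have := ubar_mem_Icc hs hκt hγ hε hγε
      linarith [(this (x + z)).1, (this (x - z)).1, (this x).2]
  unfold Dop
  linarith

end dispersion

/-- Lemma 4.7: on the interval `[X(t), X_η(t)]`, for large times,
`3 x^{2s} w²/(κt²) ≤ D[u̲] + f(u̲)`.  Here `γ₀` is as furnished by the far-field
estimate (Proposition 4.6), encoded by the hypothesis `hfar`. -/
theorem subsolution_first_interval
    (s θ κ γ γ₀ ε η J0 J1 R0 : ℝ) (J f : ℝ → ℝ) (hs : 0 < s ∧ s < 1/2)
    (hθ : 0 < θ ∧ θ < 1) (hJ : HypH s J0 J1 R0 J) (hf : Ignition θ f)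
    (hκ : 0 < κ) (hε : θ < ε ∧ ε < 1)
    (hη : 0 < η ∧ η ^ 3 / ε ^ 2 + η = ε - θ)
    (hγ₀ : 0 < γ₀ ∧ γ₀ < 1/ε)
    (hfar : ∃ t₃ : ℝ, 1 ≤ t₃ ∧
      ∀ γ' : ℝ, γ₀ ≤ γ' → γ' < 1/ε →
        ∀ t x : ℝ, t₃ ≤ t →
          max (X s κ γ' ε t + R0) (X s κ γ' (ε - η) t) < x →
          η / (16 * J0 * s * x ^ (2*s)) ≤ Dop J (ubar s κ γ' ε) t x)
    (hγ : γ₀ ≤ γ ∧ γ < 1/ε) :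
    ∃ t₄ : ℝ, 1 ≤ t₄ ∧ ∀ t x : ℝ, t₄ ≤ t →
      x ∈ Set.Icc (X s κ γ ε t) (X s κ γ (ε - η) t) →
      3 * x ^ (2*s) * (w s κ γ t x) ^ 2 / (κ * t ^ 2) ≤
        Dop J (ubar s κ γ ε) t x + f (ubar s κ γ ε t x) := by
  obtain ⟨hs, hs2⟩ := hs
  have hJ0 : 0 < J0 := hJ.1
  have hε0 : 0 < ε := hθ.1.trans hε.1
  have hγ0 : 0 < γ := hγ₀.1.trans_le hγ.1
  have hγε : γ < ε⁻¹ := one_div ε ▸ hγ.2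
  obtain ⟨hη0, hηθ⟩ := hη
  have hη3 : 0 ≤ η ^ 3 / ε ^ 2 := by positivity
  obtain ⟨m, hm, hfm⟩ := hf.exists_pos_le hθ.1.le (a := θ + η) (b := ε) (by linarith)
    (by linarith) hε.2
  obtain ⟨t₃, ht₃, hfar⟩ := hfar
  have hJint := integrableOn_sq_mul_of_frequently_Dop_ne_zero hs hs2 (t := t₃)
    (mul_pos hκ (by linarith)) hγ0 hε0 hγε <| Eventually.frequently <| by
      filter_upwards [eventually_gt_atTop (max (X s κ γ ε t₃ + R0) (X s κ γ (ε - η) t₃)),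
        eventually_gt_atTop 0] with x hx hx0
      exact ((by positivity : 0 < η / (16 * J0 * s * x ^ (2 * s)))).trans_le
        (hfar γ hγ.1 hγ.2 t₃ x le_rfl hx) |>.ne'
  have hlhs : Tendsto (fun t => 3 / (γ * t)) atTop (𝓝 0) :=
    tendsto_const_nhds.div_atTop (tendsto_id.const_mul_atTop hγ0)
  obtain ⟨T, hT⟩ := eventually_atTop.1 ((eventually_neg_le_Dop hs hs2 hκ hγ0 hε0 hγε hJ.2.2.2.1
    (fun z => hJ.le_mul_rpow) hJint (half_pos hm)).and ((hlhs.eventually (ge_mem_nhds (half_pos hm))).and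
    (eventually_gt_atTop 0)))
  refine ⟨max T 1, le_max_right _ _, fun t x ht hx => ?_⟩
  obtain ⟨hD, hL, ht0⟩ := hT t (le_of_max_le_left ht)
  have hκt := mul_pos hκ ht0
  have hx0 : 0 ≤ x := (X_pos hκt (sub_pos.2 hγε)).le.trans hx.1
  have hfu := hfm _ ⟨by linarith [sub_cube_le_ubar hs hκt hγ0 hε0 hη0.le (by linarith) hγε hx.2],
    (ubar_mem_Icc hs hκt hγ0 hε0 hγε x).2⟩
  linarith [three_mul_rpow_mul_w_sq_div_le (s := s) hκ ht0 hγ0 hx0, hD x]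
end
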